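/- Let V be the free module over ℤ/2 with basis (ℕ →₀ ℕ) × ℤ × ℤ, and let d : V → V be the ℤ/2-linear map sending a basis element x = (R,m,t) to Φ(x) when m ≠ 0 and R i = 0 for every i < v₂(m), and to 0 otherwise. Then d ∘ d = 0, and the homology ker d / im d is a free ℤ/2-module whose basis is given by the classes of the basis elements (0, 0, t) for t ∈ ℤ; in particular ker d / im d ≅ ⊕_{t ∈ ℤ} ℤ/2, corresponding to the Tate coefficients t(BPℝ)_⋆ = ℤ/2[a, a⁻¹]. -/

import Mathlib

/-!
Monomials `v_R σ^m a^t` in the E₁-term `BP_*[σ, σ⁻¹, a, a⁻¹]` of the Tate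
spectral sequence for `BPℝ` are encoded by triples `(R, m, t) ∈ (ℕ →₀ ℕ) × ℤ × ℤ`.
`V` is the free `ℤ/2`-module on these triples, and `d` is the linear map
encoding the Tate differential.
-/

/-- The 2-adic valuation of an integer. -/
noncomputable def v2 (m : ℤ) : ℕ := padicValInt 2 m

/-- The Tate differential on monomials:
`Φ(R, m, t) = (R + e_{v₂(m)}, m + 2^(v₂(m)), t + 2^(v₂(m)+1) − 1)`. -/
noncomputable def Φ : (ℕ →₀ ℕ) × ℤ × ℤ → (ℕ →₀ ℕ) × ℤ × ℤ := fun x =>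
  (x.1 + Finsupp.single (v2 x.2.1) 1,
   x.2.1 + 2 ^ v2 x.2.1,
   x.2.2 + 2 ^ (v2 x.2.1 + 1) - 1)

/-- The free `ℤ/2`-module with basis `(ℕ →₀ ℕ) × ℤ × ℤ`. -/
abbrev V : Type := ((ℕ →₀ ℕ) × ℤ × ℤ) →₀ ZMod 2

open Classical in
/-- The `ℤ/2`-linear differential: a basis element `x = (R, m, t)` is sent to
`Φ x` when `m ≠ 0` and `R i = 0` for every `i < v₂(m)`, and to `0` otherwise. -/
noncomputable def d : V →ₗ[ZMod 2] V :=
  Finsupp.lift V (ZMod 2) ((ℕ →₀ ℕ) × ℤ × ℤ) fun x =>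
    if x.2.1 ≠ 0 ∧ ∀ i < v2 x.2.1, x.1 i = 0 then Finsupp.single (Φ x) 1 else 0

/-- The homology `ker d / im d`: the quotient of `ker d` by the image of `d`
(viewed as a submodule of `ker d`). -/
abbrev TateHomology : Type :=
  @HasQuotient.Quotient _ _
    (Submodule.hasQuotient (M := LinearMap.ker d) (R := ZMod 2))
    (Submodule.comap (LinearMap.ker d).subtype (LinearMap.range d))

/-!
The basis elements `x` with `d x ≠ 0` (the *sources*) are matched with their images `Φ x`:
`Φ` is injective on sources and never produces one, because it adds `v_s` with `s = v₂(m)` while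
raising the 2-adic valuation of `m` above `s`. Conversely every basis element other than the
`(0, 0, t)` is a source or the image of one, namely of the element obtained by undoing `Φ` at the
lowest index `s` with `R s ≠ 0`. For such a perfect matching, projecting onto the unmatched
elements is a deformation retraction onto a complex with zero differential, so the homology is free
on the unmatched elements `(0, 0, t)`.
-/

section Retract

variable {R M N : Type*} [Ring R] [AddCommGroup M] [Module R M] [AddCommGroup N] [Module R N]

abbrev KerModRange (d : M →ₗ[R] M) : Type _ :=
  LinearMap.ker d ⧸ (LinearMap.range d).comap (LinearMap.ker d).subtype

variable {d h : M →ₗ[R] M} {ι : N →ₗ[R] M} {π : M →ₗ[R] N}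

noncomputable def KerModRange.equivOfRetract (hπd : π ∘ₗ d = 0) (hdι : d ∘ₗ ι = 0)
    (hπι : π ∘ₗ ι = LinearMap.id) (hh : ι ∘ₗ π + d ∘ₗ h + h ∘ₗ d = LinearMap.id) :
    N ≃ₗ[R] KerModRange d :=
  LinearEquiv.ofLinearMap
    (Submodule.mkQ _ ∘ₗ ι.codRestrict (LinearMap.ker d) fun u => by
      rw [LinearMap.mem_ker, ← LinearMap.comp_apply, hdι, LinearMap.zero_apply])
    (Submodule.liftQ _ (π ∘ₗ (LinearMap.ker d).subtype) <| by
      rintro ⟨_, _⟩ ⟨v, rfl⟩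
      rw [LinearMap.mem_ker, LinearMap.comp_apply, Submodule.subtype_apply,
        ← LinearMap.comp_apply, hπd, LinearMap.zero_apply])
    (by
      refine Submodule.linearMap_qext _ (LinearMap.ext fun ⟨z, hz⟩ => ?_)
      rw [LinearMap.mem_ker] at hz
      have hz' : ι (π z) - z = d (-h z) := by
        have := LinearMap.congr_fun hh z
        simp only [LinearMap.add_apply, LinearMap.comp_apply, hz, map_zero, add_zero,
          LinearMap.id_apply] at this
        rw [map_neg, eq_neg_iff_add_eq_zero, sub_add_eq_add_sub, this, sub_self]
      simp only [LinearMap.comp_apply, Submodule.mkQ_apply, Submodule.liftQ_apply]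
      exact (Submodule.Quotient.eq _).mpr ⟨-h z, hz'.symm⟩)
    (LinearMap.ext fun u => by
      simp only [LinearMap.comp_apply, Submodule.mkQ_apply, Submodule.liftQ_apply]
      exact LinearMap.congr_fun hπι u)

theorem KerModRange.equivOfRetract_apply (hπd : π ∘ₗ d = 0) (hdι : d ∘ₗ ι = 0)
    (hπι : π ∘ₗ ι = LinearMap.id) (hh : ι ∘ₗ π + d ∘ₗ h + h ∘ₗ d = LinearMap.id) (u : N) :
    equivOfRetract hπd hdι hπι hh u =
      Submodule.Quotient.mk ⟨ι u, LinearMap.congr_fun hdι u⟩ :=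
  rfl

end Retract

section Matching

variable (R : Type*) {X : Type*} [CommRing R] (A : Set X) (Φ : X → X)

def unmatched : Set X := (A ∪ Φ '' A)ᶜ

open Classical in
noncomputable def matchingHomotopy : (X →₀ R) →ₗ[R] X →₀ R :=
  Finsupp.lift _ R X fun y => if hy : y ∈ Φ '' A then Finsupp.single hy.choose 1 else 0

open Classical in
noncomputable def unmatchedProj : (X →₀ R) →ₗ[R] unmatched A Φ →₀ R :=
  Finsupp.lift _ R X fun x => if hx : x ∈ unmatched A Φ then Finsupp.single ⟨x, hx⟩ 1 else 0

noncomputable def matchingDiff [DecidablePred (· ∈ A)] : (X →₀ R) →ₗ[R] X →₀ R :=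
  Finsupp.lift _ R X fun x => if x ∈ A then Finsupp.single (Φ x) 1 else 0

variable {R A Φ}

open Classical in
theorem unmatchedProj_single (x : X) :
    unmatchedProj R A Φ (Finsupp.single x (1 : R)) =
      if hx : x ∈ unmatched A Φ then Finsupp.single ⟨x, hx⟩ 1 else 0 := by
  simp [unmatchedProj]

open Classical in
theorem matchingHomotopy_single (y : X) :
    matchingHomotopy R A Φ (Finsupp.single y (1 : R)) =
      if hy : y ∈ Φ '' A then Finsupp.single hy.choose 1 else 0 := by
  simp [matchingHomotopy]

theorem unmatchedProj_comp_lmapDomain_val :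
    unmatchedProj R A Φ ∘ₗ Finsupp.lmapDomain R R (Subtype.val : unmatched A Φ → X) =
      LinearMap.id := by
  refine Finsupp.lhom_ext' fun c => LinearMap.ext_ring ?_
  simp [unmatchedProj_single, c.2]

variable [DecidablePred (· ∈ A)]

theorem matchingDiff_single (x : X) :
    matchingDiff R A Φ (Finsupp.single x (1 : R)) =
      if x ∈ A then Finsupp.single (Φ x) 1 else 0 := by
  simp [matchingDiff]

theorem matchingDiff_comp_self (hA : Set.MapsTo Φ A Aᶜ) :
    matchingDiff R A Φ ∘ₗ matchingDiff R A Φ = (0 : (X →₀ R) →ₗ[R] _) := by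
  refine Finsupp.lhom_ext' fun x => LinearMap.ext_ring ?_
  simp only [LinearMap.comp_apply, Finsupp.lsingle_apply, LinearMap.zero_apply, matchingDiff_single]
  split_ifs with hx
  · rw [matchingDiff_single, if_neg (hA hx)]
  · exact map_zero _

theorem unmatchedProj_comp_matchingDiff :
    unmatchedProj R A Φ ∘ₗ matchingDiff R A Φ = (0 : (X →₀ R) →ₗ[R] _) := by
  refine Finsupp.lhom_ext' fun x => LinearMap.ext_ring ?_
  simp only [LinearMap.comp_apply, Finsupp.lsingle_apply, LinearMap.zero_apply, matchingDiff_single]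
  split_ifs with hx
  · have : Φ x ∉ unmatched A Φ := fun h => h (Or.inr (Set.mem_image_of_mem Φ hx))
    simp [unmatchedProj_single, this]
  · exact map_zero _

theorem matchingDiff_comp_lmapDomain_val :
    matchingDiff R A Φ ∘ₗ Finsupp.lmapDomain R R (Subtype.val : unmatched A Φ → X) = 0 := by
  refine Finsupp.lhom_ext' fun c => LinearMap.ext_ring ?_
  have hc : (c : X) ∉ A := fun h => c.2 (Or.inl h)
  simp [matchingDiff_single, hc]

theorem matchingHomotopy_spec (hinj : Set.InjOn Φ A) (hA : Set.MapsTo Φ A Aᶜ) :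
    Finsupp.lmapDomain R R (Subtype.val : unmatched A Φ → X) ∘ₗ unmatchedProj R A Φ +
      matchingDiff R A Φ ∘ₗ matchingHomotopy R A Φ + matchingHomotopy R A Φ ∘ₗ matchingDiff R A Φ =
      LinearMap.id := by
  refine Finsupp.lhom_ext' fun x => LinearMap.ext_ring ?_
  simp only [LinearMap.add_apply, LinearMap.comp_apply, Finsupp.lsingle_apply, LinearMap.id_apply]
  by_cases hxA : x ∈ A
  · have hx : x ∉ unmatched A Φ := fun h => h (Or.inl hxA)
    have hxB : x ∉ Φ '' A := fun ⟨y, hy, hyx⟩ => hA hy (hyx ▸ hxA)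
    have hΦx : Φ x ∈ Φ '' A := Set.mem_image_of_mem Φ hxA
    have : hΦx.choose = x := hinj hΦx.choose_spec.1 hxA hΦx.choose_spec.2
    simp [unmatchedProj_single, matchingHomotopy_single, matchingDiff_single, hx, hxA, hxB, hΦx,
      this]
  by_cases hxB : x ∈ Φ '' A
  · have hx : x ∉ unmatched A Φ := fun h => h (Or.inr hxB)
    simp [unmatchedProj_single, matchingHomotopy_single, matchingDiff_single, hx, hxA, hxB,
      hxB.choose_spec.1, hxB.choose_spec.2]
  · have hx : x ∈ unmatched A Φ := by simp [unmatched, hxA, hxB]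
    simp [unmatchedProj_single, matchingHomotopy_single, matchingDiff_single, hx, hxA, hxB]

theorem exists_basis_kerModRange_matchingDiff (hinj : Set.InjOn Φ A) (hA : Set.MapsTo Φ A Aᶜ) :
    ∃ b : Module.Basis (unmatched A Φ) R (KerModRange (matchingDiff R A Φ)),
      ∀ c : unmatched A Φ,
        ∃ h : Finsupp.single (c : X) (1 : R) ∈ LinearMap.ker (matchingDiff R A Φ),
          b c = Submodule.Quotient.mk ⟨Finsupp.single (c : X) 1, h⟩ := by
  let e := KerModRange.equivOfRetract (unmatchedProj_comp_matchingDiff (R := R))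
    matchingDiff_comp_lmapDomain_val unmatchedProj_comp_lmapDomain_val
    (matchingHomotopy_spec hinj hA)
  refine ⟨Finsupp.basisSingleOne.map e, fun c => ⟨?_, ?_⟩⟩
  · simpa using LinearMap.congr_fun matchingDiff_comp_lmapDomain_val (Finsupp.single c 1)
  · simp [e, KerModRange.equivOfRetract_apply]

end Matching

section TwoAdic

theorem two_pow_dvd_iff_le_v2 {m : ℤ} (hm : m ≠ 0) {n : ℕ} : (2 : ℤ) ^ n ∣ m ↔ n ≤ v2 m := by
  rw [v2]
  simpa [hm] using padicValInt_dvd_iff (p := 2) n m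

theorem v2_two_pow_mul_of_not_two_dvd {s : ℕ} {k : ℤ} (hk : ¬ 2 ∣ k) : v2 (2 ^ s * k) = s := by
  have hm : (2 : ℤ) ^ s * k ≠ 0 := mul_ne_zero (by positivity) (by rintro rfl; simp at hk)
  have hle : s ≤ v2 (2 ^ s * k) := (two_pow_dvd_iff_le_v2 hm).1 (dvd_mul_right _ _)
  have hlt : ¬ s + 1 ≤ v2 (2 ^ s * k) := fun h => hk <| by
    have := (two_pow_dvd_iff_le_v2 hm).2 h
    rwa [pow_succ, mul_dvd_mul_iff_left (by positivity)] at this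
  omega

theorem exists_eq_two_pow_v2_mul {m : ℤ} (hm : m ≠ 0) : ∃ k, ¬ 2 ∣ k ∧ m = 2 ^ v2 m * k := by
  obtain ⟨k, hk⟩ : (2 : ℤ) ^ v2 m ∣ m := by exact_mod_cast padicValInt_dvd (p := 2) m
  refine ⟨k, fun ⟨j, hj⟩ => ?_, hk⟩
  have : (2 : ℤ) ^ (v2 m + 1) ∣ m := ⟨j, by rw [pow_succ, mul_assoc, ← hj]; exact hk⟩
  exact absurd ((two_pow_dvd_iff_le_v2 hm).1 this) (by omega)

theorem two_pow_succ_v2_dvd_add {m : ℤ} (hm : m ≠ 0) : (2 : ℤ) ^ (v2 m + 1) ∣ m + 2 ^ v2 m := by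
  obtain ⟨k, hk, hmk⟩ := exists_eq_two_pow_v2_mul hm
  obtain ⟨j, hj⟩ : (2 : ℤ) ∣ k + 1 := by omega
  exact ⟨j, by rw [pow_succ]; linear_combination hmk + 2 ^ v2 m * hj⟩

theorem sub_two_pow_eq_two_pow_mul {m : ℤ} {s : ℕ} (h : (2 : ℤ) ^ (s + 1) ∣ m) :
    ∃ k, ¬ 2 ∣ k ∧ m - 2 ^ s = 2 ^ s * k := by
  obtain ⟨j, rfl⟩ := h
  exact ⟨2 * j - 1, by omega, by ring⟩

end TwoAdic

def tateSources : Set ((ℕ →₀ ℕ) × ℤ × ℤ) := {x | x.2.1 ≠ 0 ∧ ∀ i < v2 x.2.1, x.1 i = 0}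

-- Chosen so that `d` is definitionally `matchingDiff (ZMod 2) tateSources Φ`.
open Classical in
noncomputable instance : DecidablePred (· ∈ tateSources) := fun x =>
  inferInstanceAs (Decidable (x.2.1 ≠ 0 ∧ ∀ i < v2 x.2.1, x.1 i = 0))

theorem Φ_fst_apply_v2_ne_zero (x : (ℕ →₀ ℕ) × ℤ × ℤ) : (Φ x).1 (v2 x.2.1) ≠ 0 := by
  simp [Φ]

theorem mapsTo_Φ_tateSources : Set.MapsTo Φ tateSources tateSourcesᶜ := by
  rintro x ⟨hm, -⟩ ⟨hm', hR'⟩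
  have hlt : v2 x.2.1 < v2 (Φ x).2.1 := (two_pow_dvd_iff_le_v2 hm').1 (two_pow_succ_v2_dvd_add hm)
  exact Φ_fst_apply_v2_ne_zero x (hR' _ hlt)

theorem injOn_Φ_tateSources : Set.InjOn Φ tateSources := by
  rintro x ⟨-, hx⟩ y ⟨-, hy⟩ h
  simp only [Φ, Prod.mk.injEq] at h
  obtain ⟨hR, hm, ht⟩ := h
  have hv : v2 x.2.1 = v2 y.2.1 := by
    by_contra hne
    rcases Nat.lt_or_gt_of_ne hne with hlt | hlt
    · have := DFunLike.congr_fun hR (v2 x.2.1)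
      simp [hy _ hlt, hne] at this
    · have := DFunLike.congr_fun hR (v2 y.2.1)
      simp [hx _ hlt, hne] at this
  rw [hv] at hR hm ht
  exact Prod.ext (add_right_cancel hR) (Prod.ext (by linarith) (by linarith))

theorem mem_image_Φ_tateSources {y : (ℕ →₀ ℕ) × ℤ × ℤ} (hy : y ∉ tateSources) (hR : y.1 ≠ 0) :
    y ∈ Φ '' tateSources := by
  -- `s` is the lowest index with `y.1 s ≠ 0`, where `Φ` is undone.
  have hex : ∃ i, y.1 i ≠ 0 := by simpa [Finsupp.ext_iff] using hR
  set s := Nat.find hex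
  have hdvd : (2 : ℤ) ^ (s + 1) ∣ y.2.1 := by
    rcases eq_or_ne y.2.1 0 with hm | hm
    · simp [hm]
    obtain ⟨i, hi, hyi⟩ : ∃ i < v2 y.2.1, y.1 i ≠ 0 := by
      simpa [tateSources, hm] using hy
    exact (two_pow_dvd_iff_le_v2 hm).2 (by have := Nat.find_min' hex hyi; omega)
  obtain ⟨k, hk, hmk⟩ := sub_two_pow_eq_two_pow_mul hdvd
  have hv : v2 (y.2.1 - 2 ^ s) = s := hmk ▸ v2_two_pow_mul_of_not_two_dvd hk
  refine ⟨(y.1 - Finsupp.single s 1, y.2.1 - 2 ^ s, y.2.2 - 2 ^ (s + 1) + 1), ⟨?_, ?_⟩, ?_⟩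
  · rw [hmk]; exact mul_ne_zero (by positivity) (by rintro rfl; simp at hk)
  · intro i hi
    simp only [hv] at hi
    simp [not_not.1 (Nat.find_min hex hi)]
  · simp only [Φ, hv]
    refine Prod.ext ?_ (Prod.ext (by ring) (by ring))
    exact tsub_add_cancel_of_le <|
      Finsupp.single_le_iff.2 (Nat.one_le_iff_ne_zero.2 (Nat.find_spec hex))

theorem unmatched_tateSources :
    unmatched tateSources Φ = Set.range fun t : ℤ => ((0 : ℕ →₀ ℕ), (0 : ℤ), t) := by
  ext y
  simp only [unmatched, Set.mem_compl_iff, Set.mem_union, not_or, Set.mem_range]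
  constructor
  · rintro ⟨hA, hB⟩
    have hR : y.1 = 0 := by_contra fun hR => hB (mem_image_Φ_tateSources hA hR)
    have hm : y.2.1 = 0 := by_contra fun hm => hA ⟨hm, by simp [hR]⟩
    exact ⟨y.2.2, Prod.ext hR.symm (Prod.ext hm.symm rfl)⟩
  · rintro ⟨t, rfl⟩
    refine ⟨fun h => h.1 rfl, ?_⟩
    rintro ⟨x, -, hx⟩
    exact Φ_fst_apply_v2_ne_zero x (by rw [hx]; rfl)

theorem tate_homology_BPR :
    d ∘ₗ d = 0 ∧
    ∃ b : Module.Basis ℤ (ZMod 2) TateHomology,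
      (∀ t : ℤ,
        ∃ h : Finsupp.single ((0 : ℕ →₀ ℕ), (0 : ℤ), t) (1 : ZMod 2) ∈ LinearMap.ker d,
          b t = Submodule.Quotient.mk
            ⟨Finsupp.single ((0 : ℕ →₀ ℕ), (0 : ℤ), t) (1 : ZMod 2), h⟩) ∧
      Nonempty (TateHomology ≃ₗ[ZMod 2] (ℤ →₀ ZMod 2)) := by
  refine ⟨matchingDiff_comp_self (R := ZMod 2) (A := tateSources) mapsTo_Φ_tateSources, ?_⟩
  obtain ⟨b, hb⟩ := exists_basis_kerModRange_matchingDiff (R := ZMod 2)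
    injOn_Φ_tateSources mapsTo_Φ_tateSources
  let e : ℤ ≃ unmatched tateSources Φ :=
    (Equiv.ofInjective _ fun _ _ h => congrArg (·.2.2) h).trans
      (Equiv.setCongr unmatched_tateSources.symm)
  refine ⟨b.reindex e.symm, fun t => ?_, ⟨(b.reindex e.symm).repr⟩⟩
  obtain ⟨h, hbt⟩ := hb (e t)
  exact ⟨h, (b.reindex_apply e.symm t).trans hbt⟩
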